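/- arXiv:1207.4937 — 2 statements merged into one kernel-verified Lean document; each statement's English description precedes it below -/
import Mathlib

section
/- For a continuous map f on a compact metric space, the weak polynomial entropy is at most the strong polynomial entropy: h_pol^*(f) ≤ h_pol(f). -/
open Set Filter Metric

/-- The dynamical metric `d_n^f(x,y) = max_{0 ≤ k ≤ n-1} d(f^k x, f^k y)`. -/
noncomputable def dynDist {X : Type*} [PseudoMetricSpace X] (f : X → X) (n : ℕ) (x y : X) : ℝ :=
  (((Finset.range n).sup fun k => nndist (f^[k] x) (f^[k] y)) : NNReal)

/-- `G_n^f(ε)`: the minimal number of `d_n^f`-balls of radius `ε` covering the space. -/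
noncomputable def coverNum {X : Type*} [PseudoMetricSpace X] (f : X → X) (n : ℕ) (ε : ℝ) : ℕ :=
  sInf {m : ℕ | ∃ s : Finset X, s.card = m ∧ ∀ x : X, ∃ c ∈ s, dynDist f n c x < ε}

/-- The strong polynomial entropy `h_pol(f) = sup_{ε>0} limsup_n log G_n^f(ε) / log n`. -/
noncomputable def hpol {X : Type*} [PseudoMetricSpace X] (f : X → X) : ENNReal :=
  ⨆ ε : {e : ℝ // 0 < e},
    Filter.limsup
      (fun n : ℕ => ENNReal.ofReal (Real.log (coverNum f n (ε : ℝ)) / Real.log n))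
      Filter.atTop

/-- A covering of `X` by dynamical balls `B_{n_i}^f(x_i, ε)` with all orders `n_i ≥ N`. -/
def IsDynCover {X : Type*} [PseudoMetricSpace X] (f : X → X) (ε : ℝ) (N : ℕ)
    (C : Set (X × ℕ)) : Prop :=
  (∀ p ∈ C, N ≤ p.2) ∧ ∀ x : X, ∃ p ∈ C, dynDist f p.2 p.1 x < ε

/-- The weight `M(C,s) = Σ_i n_i^{-s}` of a covering by dynamical balls. -/
noncomputable def covWeight {X : Type*} (C : Set (X × ℕ)) (s : ℝ) : ENNReal :=
  ∑' p : C, ((p : X × ℕ).2 : ENNReal) ^ (-s)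

/-- `Δ^f(ε,s) = sup_{N ≥ 1} inf { M(C,s) | C a covering by dynamical balls of orders ≥ N }`. -/
noncomputable def dynDelta {X : Type*} [PseudoMetricSpace X] (f : X → X) (ε s : ℝ) : ENNReal :=
  ⨆ N : ℕ, ⨅ C : {C : Set (X × ℕ) // IsDynCover f ε (N + 1) C}, covWeight (C : Set (X × ℕ)) s

/-- The critical exponent `s_c^f(ε)`, i.e. the supremum of the `s ≥ 0` with `Δ^f(ε,s) = ∞`. -/
noncomputable def scrit {X : Type*} [PseudoMetricSpace X] (f : X → X) (ε : ℝ) : ENNReal :=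
  sSup {x : ENNReal | ∃ s : ℝ, 0 ≤ s ∧ x = ENNReal.ofReal s ∧ dynDelta f ε s = ⊤}

/-- The weak polynomial entropy `h_pol^*(f) = sup_{ε>0} s_c^f(ε)`. -/
noncomputable def hpolStar {X : Type*} [PseudoMetricSpace X] (f : X → X) : ENNReal :=
  ⨆ ε : {e : ℝ // 0 < e}, scrit f (ε : ℝ)

/-! If `limsup_n log G_n^f(ε) / log n < s`, then `G_n^f(ε) ≤ n^s` for all large `n`, so
covering `X` by `G_n^f(ε)` dynamical balls of the single order `n` gives a cover of weight
`G_n^f(ε) · n^{-s} ≤ 1` with `n` arbitrarily large. Hence `Δ^f(ε, s) ≤ 1 < ∞`, i.e. every `s`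
with `Δ^f(ε, s) = ∞` is at most that limsup. -/

open scoped ENNReal

lemma covWeight_image_prodMk {X : Type*} [DecidableEq X] (s : Finset X) (n : ℕ) (t : ℝ) :
    covWeight (↑(s.image fun c => (c, n)) : Set (X × ℕ)) t = s.card * (n : ℝ≥0∞) ^ (-t) := by
  rw [covWeight, Finset.tsum_subtype' _ fun p : X × ℕ => (p.2 : ℝ≥0∞) ^ (-t),
    Finset.sum_image fun _ _ _ _ h => (Prod.mk.inj h).1]
  simp

lemma covWeight_image_prodMk_le_one {X : Type*} [DecidableEq X] (s : Finset X) {n : ℕ}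
    (hn : n ≠ 0) {t : ℝ} (hcard : (s.card : ℝ) ≤ (n : ℝ) ^ t) :
    covWeight (↑(s.image fun c => (c, n)) : Set (X × ℕ)) t ≤ 1 := by
  have hn' : (n : ℝ≥0∞) ≠ 0 := by exact_mod_cast hn
  have hcard' : (s.card : ℝ≥0∞) ≤ (n : ℝ≥0∞) ^ t := by
    rw [← ENNReal.ofReal_natCast, ← ENNReal.ofReal_natCast n,
      ENNReal.ofReal_rpow_of_pos (by positivity)]
    exact ENNReal.ofReal_le_ofReal hcard
  calc covWeight _ t = s.card * (n : ℝ≥0∞) ^ (-t) := covWeight_image_prodMk s n t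
    _ ≤ (n : ℝ≥0∞) ^ t * (n : ℝ≥0∞) ^ (-t) := by gcongr
    _ = 1 := by
      rw [← ENNReal.rpow_add _ _ hn' (ENNReal.natCast_ne_top n), add_neg_cancel,
        ENNReal.rpow_zero]

lemma natCast_le_rpow_of_log_div_log_lt {m : ℕ} {x t : ℝ} (hx : 1 < x)
    (h : Real.log m / Real.log x < t) : (m : ℝ) ≤ x ^ t := by
  rcases Nat.eq_zero_or_pos m with rfl | hm
  · simpa using (Real.rpow_pos_of_pos (by linarith) t).le
  rw [Real.le_rpow_iff_log_le (by exact_mod_cast hm) (by linarith)]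
  exact ((div_lt_iff₀ (Real.log_pos hx)).1 h).le

section

variable {X : Type*} [PseudoMetricSpace X]

lemma dynDist_self (f : X → X) (n : ℕ) (x : X) : dynDist f n x x = 0 := by
  simp [dynDist]

lemma dynDist_lt_iff (f : X → X) (n : ℕ) (x y : X) {ε : ℝ} (hε : 0 < ε) :
    dynDist f n x y < ε ↔ ∀ k ∈ Finset.range n, dist (f^[k] x) (f^[k] y) < ε := by
  lift ε to NNReal using hε.le
  simp only [dynDist, NNReal.coe_lt_coe, dist_nndist]
  exact Finset.sup_lt_iff (by exact_mod_cast hε)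

lemma setOf_dynDist_lt_eq_biInter (f : X → X) (n : ℕ) (c : X) {ε : ℝ} (hε : 0 < ε) :
    {y | dynDist f n c y < ε} = ⋂ k ∈ Finset.range n, f^[k] ⁻¹' ball (f^[k] c) ε := by
  ext y
  simp only [mem_ofPred_eq, dynDist_lt_iff f n c y hε, mem_iInter, mem_preimage, mem_ball,
    dist_comm (f^[_] y)]

lemma isOpen_setOf_dynDist_lt {f : X → X} (hf : Continuous f) (n : ℕ) (c : X) {ε : ℝ}
    (hε : 0 < ε) : IsOpen {y | dynDist f n c y < ε} := by
  rw [setOf_dynDist_lt_eq_biInter f n c hε]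
  exact isOpen_biInter_finset fun k _ => isOpen_ball.preimage (hf.iterate k)

lemma exists_finset_dynDist_lt [CompactSpace X] {f : X → X} (hf : Continuous f) (n : ℕ)
    {ε : ℝ} (hε : 0 < ε) : ∃ s : Finset X, ∀ x : X, ∃ c ∈ s, dynDist f n c x < ε := by
  obtain ⟨s, hs⟩ := isCompact_univ.elim_finite_subcover (fun c : X => {y | dynDist f n c y < ε})
    (isOpen_setOf_dynDist_lt hf n · hε)
    (fun x _ => mem_iUnion.2 ⟨x, by simpa [dynDist_self] using hε⟩)
  exact ⟨s, fun x => by simpa using hs (mem_univ x)⟩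

lemma exists_card_eq_coverNum [CompactSpace X] {f : X → X} (hf : Continuous f) (n : ℕ)
    {ε : ℝ} (hε : 0 < ε) :
    ∃ s : Finset X, s.card = coverNum f n ε ∧ ∀ x : X, ∃ c ∈ s, dynDist f n c x < ε :=
  Nat.sInf_mem (s := {m | ∃ s : Finset X, s.card = m ∧ ∀ x, ∃ c ∈ s, dynDist f n c x < ε})
    (have ⟨s, hs⟩ := exists_finset_dynDist_lt hf n hε; ⟨s.card, s, rfl, hs⟩)

lemma dynDelta_le_one_of_frequently_coverNum_le [CompactSpace X] {f : X → X} (hf : Continuous f)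
    {ε : ℝ} (hε : 0 < ε) {t : ℝ}
    (h : ∃ᶠ n : ℕ in atTop, (coverNum f n ε : ℝ) ≤ (n : ℝ) ^ t) : dynDelta f ε t ≤ 1 := by
  classical
  refine iSup_le fun N => ?_
  obtain ⟨n, hnN, hn⟩ := frequently_atTop.1 h (N + 1)
  obtain ⟨s, hcard, hcover⟩ := exists_card_eq_coverNum hf n hε
  have hC : IsDynCover f ε (N + 1) ↑(s.image fun c => (c, n)) := by
    refine ⟨fun p hp => ?_, fun x => ?_⟩
    · obtain ⟨c, -, rfl⟩ := Finset.mem_image.1 hp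
      exact hnN
    · obtain ⟨c, hc, hcx⟩ := hcover x
      exact ⟨(c, n), Finset.mem_image_of_mem _ hc, hcx⟩
  exact (iInf_le _ ⟨_, hC⟩).trans
    (covWeight_image_prodMk_le_one s (by omega) (hcard ▸ hn))

lemma ofReal_le_limsup_of_dynDelta_eq_top [CompactSpace X] {f : X → X} (hf : Continuous f)
    {ε : ℝ} (hε : 0 < ε) {t : ℝ} (hΔ : dynDelta f ε t = ⊤) :
    ENNReal.ofReal t ≤
      limsup (fun n : ℕ => ENNReal.ofReal (Real.log (coverNum f n ε) / Real.log n)) atTop := by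
  by_contra! hlt
  have hcover : ∀ᶠ n : ℕ in atTop, (coverNum f n ε : ℝ) ≤ (n : ℝ) ^ t := by
    filter_upwards [eventually_lt_of_limsup_lt hlt, eventually_ge_atTop 2] with n hn hn2
    exact natCast_le_rpow_of_log_div_log_lt (by exact_mod_cast hn2)
      (ENNReal.ofReal_lt_ofReal_iff'.1 hn).1
  have hle := dynDelta_le_one_of_frequently_coverNum_le hf hε hcover.frequently
  exact ENNReal.one_ne_top (top_le_iff.1 (hΔ ▸ hle))

end

/-- For a continuous map on a compact metric space, the weak polynomial entropy is at most
the strong polynomial entropy: `h_pol^*(f) ≤ h_pol(f)`. -/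
theorem stmt1 {X : Type*} [MetricSpace X] [CompactSpace X] (f : X → X) (hf : Continuous f) :
    hpolStar f ≤ hpol f :=
  iSup_le fun ε => sSup_le fun _ ⟨_, _, hs, hΔ⟩ =>
    hs ▸ (ofReal_le_limsup_of_dynDelta_eq_top hf ε.2 hΔ).trans (le_iSup_of_le ε le_rfl)
end

section
/- If F = ∪_{i∈ℕ} F_i where each F_i is closed and invariant under f, then the weak polynomial entropy satisfies h_pol^*(f|_F) = sup_{i∈ℕ} h_pol^*(f|_{F_i}). -/
open Set Filter Metric

/-- A union of invariant sets is invariant. -/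
def unionMapsTo {X : Type*} {ι : Sort*} {f : X → X} {A : ι → Set X}
    (h : ∀ i, Set.MapsTo f (A i) (A i)) : Set.MapsTo f (⋃ i, A i) (⋃ i, A i) := by
  intro x hx
  rcases Set.mem_iUnion.1 hx with ⟨i, hi⟩
  exact Set.mem_iUnion.2 ⟨i, h i hi⟩

/-!
Monotonicity gives `≥`: a cover of `F` by dynamical `ε/2`-balls yields a cover of `Fᵢ` by
`ε`-balls centred in `Fᵢ` of no larger weight. For `≤`, suppose `Δ(ε, t) < ∞` on every `Fᵢ` and
let `s > t`. Raising the exponent from `t` to `s` multiplies the weight of a cover by balls of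
order `≥ n` by at most `n^{-(s-t)}`, so each `Fᵢ` has covers of arbitrarily large orders with
`s`-weight below any prescribed `δᵢ > 0`. Choosing `∑ δᵢ < 1`, their union covers `F` with weight
`< 1`, hence `Δ(ε, s) < ∞` on `F`: the countable stability of a Hausdorff-type dimension.
-/

open scoped ENNReal Topology

section DynDist

variable {X : Type*} [PseudoMetricSpace X] {f : X → X}

lemma dynDist_comm (n : ℕ) (x y : X) : dynDist f n x y = dynDist f n y x := by
  unfold dynDist
  congr 1
  exact Finset.sup_congr rfl fun k _ => nndist_comm _ _

lemma dynDist_triangle (n : ℕ) (x y z : X) :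
    dynDist f n x z ≤ dynDist f n x y + dynDist f n y z := by
  unfold dynDist
  have : ((Finset.range n).sup fun k => nndist (f^[k] x) (f^[k] z)) ≤
      ((Finset.range n).sup fun k => nndist (f^[k] x) (f^[k] y)) +
      ((Finset.range n).sup fun k => nndist (f^[k] y) (f^[k] z)) :=
    Finset.sup_le fun k hk => (nndist_triangle _ (f^[k] y) _).trans <|
      add_le_add (Finset.le_sup (f := fun k => nndist (f^[k] x) (f^[k] y)) hk)
        (Finset.le_sup (f := fun k => nndist (f^[k] y) (f^[k] z)) hk)
  exact_mod_cast this

lemma dynDist_restrict {A : Set X} (hA : MapsTo f A A) (n : ℕ) (x y : A) :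
    dynDist hA.restrict n x y = dynDist f n x y := by
  unfold dynDist
  congr 1
  refine Finset.sup_congr rfl fun k _ => ?_
  rw [Subtype.nndist_eq, hA.coe_iterate_restrict, hA.coe_iterate_restrict]

end DynDist

section CovWeight

variable {α β : Type*}

lemma covWeight_image_le (g : α × ℕ → β × ℕ) (hg : ∀ p, (g p).2 = p.2) (C : Set (α × ℕ))
    (s : ℝ) : covWeight (g '' C) s ≤ covWeight C s := by
  have hsurj : Function.Surjective fun p : C => (⟨g p, mem_image_of_mem g p.2⟩ : g '' C) := by
    rintro ⟨_, p, hp, rfl⟩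
    exact ⟨⟨p, hp⟩, rfl⟩
  calc covWeight (g '' C) s ≤ ∑' p : C, ((g p).2 : ℝ≥0∞) ^ (-s) :=
        ENNReal.tsum_le_tsum_comp_of_surjective hsurj _
    _ = covWeight C s := tsum_congr fun p => by rw [hg]

lemma covWeight_iUnion_le {ι : Type*} (C : ι → Set (α × ℕ)) (s : ℝ) :
    covWeight (⋃ i, C i) s ≤ ∑' i, covWeight (C i) s :=
  ENNReal.tsum_iUnion_le_tsum (fun p : α × ℕ => (p.2 : ℝ≥0∞) ^ (-s)) C

lemma natCast_rpow_neg_le_mul {n k : ℕ} (hn : 0 < n) (hnk : n ≤ k) {s t : ℝ} (hts : t ≤ s) :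
    (k : ℝ≥0∞) ^ (-s) ≤ (n : ℝ≥0∞) ^ (-(s - t)) * (k : ℝ≥0∞) ^ (-t) := by
  have hk : (k : ℝ≥0∞) ≠ 0 := by exact_mod_cast (hn.trans_le hnk).ne'
  calc (k : ℝ≥0∞) ^ (-s) = (k : ℝ≥0∞) ^ (-(s - t)) * (k : ℝ≥0∞) ^ (-t) := by
        rw [← ENNReal.rpow_add _ _ hk (ENNReal.natCast_ne_top k)]
        ring_nf
    _ ≤ (n : ℝ≥0∞) ^ (-(s - t)) * (k : ℝ≥0∞) ^ (-t) := by
        rw [ENNReal.rpow_neg, ENNReal.rpow_neg _ (s - t)]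
        gcongr

lemma covWeight_le_mul_covWeight {C : Set (α × ℕ)} {n : ℕ} (hn : 0 < n)
    (hC : ∀ p ∈ C, n ≤ p.2) {s t : ℝ} (hts : t ≤ s) :
    covWeight C s ≤ (n : ℝ≥0∞) ^ (-(s - t)) * covWeight C t := by
  unfold covWeight
  rw [← ENNReal.tsum_mul_left]
  exact ENNReal.tsum_le_tsum fun p => natCast_rpow_neg_le_mul hn (hC p.1 p.2) hts

end CovWeight

lemma ENNReal.tendsto_natCast_rpow_neg_atTop {r : ℝ} (hr : 0 < r) :
    Tendsto (fun n : ℕ => (n : ℝ≥0∞) ^ (-r)) atTop (𝓝 0) := by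
  simp_rw [ENNReal.rpow_neg]
  rw [← ENNReal.inv_top]
  exact tendsto_inv_iff.2 <|
    (ENNReal.tendsto_rpow_at_top hr).comp ENNReal.tendsto_nat_nhds_top

section DynCover

variable {X : Type*} [PseudoMetricSpace X] {f : X → X} {ε : ℝ}

lemma IsDynCover.mono {N M : ℕ} {C : Set (X × ℕ)} (hNM : N ≤ M) (hC : IsDynCover f ε M C) :
    IsDynCover f ε N C :=
  ⟨fun p hp => hNM.trans (hC.1 p hp), hC.2⟩

lemma dynDelta_of_isEmpty [IsEmpty X] (s : ℝ) : dynDelta f ε s = 0 := by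
  refine ENNReal.iSup_eq_zero.2 fun N =>
    le_antisymm (iInf_le_of_le ⟨∅, ?_, isEmptyElim⟩ ?_) bot_le
  · simp
  · simp [covWeight]

lemma ofReal_le_scrit {s : ℝ} (hs : 0 ≤ s) (h : dynDelta f ε s = ⊤) :
    ENNReal.ofReal s ≤ scrit f ε :=
  le_sSup ⟨s, hs, rfl, h⟩

lemma exists_isDynCover_covWeight_le {t s : ℝ} (hΔ : dynDelta f ε t ≠ ⊤) (hts : t < s) (N : ℕ)
    {c : ℝ≥0∞} (hc : c ≠ 0) : ∃ C, IsDynCover f ε N C ∧ covWeight C s ≤ c := by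
  set K := dynDelta f ε t + 1
  have hK : K ≠ ⊤ := ENNReal.add_ne_top.2 ⟨hΔ, ENNReal.one_ne_top⟩
  have hK0 : K ≠ 0 := by simp [K]
  have hcK : 0 < c / K := ENNReal.div_pos hc hK
  obtain ⟨m, hNm, hm⟩ := ((eventually_ge_atTop N).and
    (((ENNReal.tendsto_natCast_rpow_neg_atTop (sub_pos.2 hts)).comp
      (tendsto_add_atTop_nat 1)).eventually (gt_mem_nhds hcK))).exists
  have hlt : ⨅ C : {C // IsDynCover f ε (m + 1) C}, covWeight C.1 t < K :=
    (le_iSup (fun N => ⨅ C : {C // IsDynCover f ε (N + 1) C}, covWeight C.1 t) m).trans_lt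
      (ENNReal.lt_add_right hΔ one_ne_zero)
  obtain ⟨⟨C, hC⟩, hCt⟩ := iInf_lt_iff.1 hlt
  refine ⟨C, hC.mono (by omega), ?_⟩
  calc covWeight C s ≤ ((m + 1 : ℕ) : ℝ≥0∞) ^ (-(s - t)) * covWeight C t :=
        covWeight_le_mul_covWeight m.succ_pos hC.1 hts.le
    _ ≤ c / K * K := mul_le_mul' hm.le hCt.le
    _ = c := ENNReal.div_mul_cancel hK0 hK

end DynCover

section Restrict

variable {X : Type*} [PseudoMetricSpace X] {f : X → X} {ε : ℝ}

lemma IsDynCover.exists_restrict_of_subset {A B : Set X} [Nonempty A] (hAB : A ⊆ B)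
    (hA : MapsTo f A A) (hB : MapsTo f B B) {N : ℕ} {C : Set (B × ℕ)}
    (hC : IsDynCover hB.restrict (ε / 2) N C) :
    ∃ D, IsDynCover hA.restrict ε N D ∧ ∀ s, covWeight D s ≤ covWeight C s := by
  classical
  let g : B × ℕ → A × ℕ := fun p =>
    (if h : ∃ y : A, dynDist f p.2 p.1 y < ε / 2 then h.choose else Classical.arbitrary A, p.2)
  refine ⟨g '' C, ⟨?_, fun x => ?_⟩, covWeight_image_le g (fun _ => rfl) C⟩
  · rintro _ ⟨p, hp, rfl⟩
    exact hC.1 p hp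
  obtain ⟨p, hp, hpx⟩ := hC.2 ⟨x, hAB x.2⟩
  rw [dynDist_restrict] at hpx
  have hex : ∃ y : A, dynDist f p.2 p.1 y < ε / 2 := ⟨x, hpx⟩
  refine ⟨g p, mem_image_of_mem g hp, ?_⟩
  rw [dynDist_restrict, show (g p).1 = hex.choose from dif_pos hex]
  calc dynDist f p.2 hex.choose x ≤ dynDist f p.2 hex.choose p.1 + dynDist f p.2 p.1 x :=
        dynDist_triangle _ _ _ _
    _ < ε / 2 + ε / 2 := add_lt_add (dynDist_comm (f := f) p.2 _ _ ▸ hex.choose_spec) hpx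
    _ = ε := add_halves ε

lemma dynDelta_restrict_le_of_subset {A B : Set X} (hAB : A ⊆ B) (hA : MapsTo f A A)
    (hB : MapsTo f B B) (s : ℝ) :
    dynDelta hA.restrict ε s ≤ dynDelta hB.restrict (ε / 2) s := by
  cases isEmpty_or_nonempty A with
  | inl _ => simp [dynDelta_of_isEmpty]
  | inr _ =>
    refine iSup_mono fun N => le_iInf fun ⟨C, hC⟩ => ?_
    obtain ⟨D, hD, hDC⟩ := hC.exists_restrict_of_subset hAB hA hB
    exact iInf_le_of_le ⟨D, hD⟩ (hDC s)

lemma hpolStar_restrict_mono {A B : Set X} (hAB : A ⊆ B) (hA : MapsTo f A A)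
    (hB : MapsTo f B B) : hpolStar hA.restrict ≤ hpolStar hB.restrict := by
  refine iSup_le fun ε => le_iSup_of_le ⟨ε / 2, half_pos ε.2⟩ (sSup_le_sSup ?_)
  rintro _ ⟨s, hs, rfl, hΔ⟩
  exact ⟨s, hs, rfl, top_le_iff.1 (hΔ ▸ dynDelta_restrict_le_of_subset hAB hA hB s)⟩

lemma IsDynCover.iUnion_restrict {ι : Type*} {A : ι → Set X} (hA : ∀ i, MapsTo f (A i) (A i))
    {N : ℕ} {C : ∀ i, Set (A i × ℕ)} (hC : ∀ i, IsDynCover (hA i).restrict ε N (C i)) :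
    IsDynCover (unionMapsTo hA).restrict ε N
      (⋃ i, Prod.map (inclusion (subset_iUnion A i)) id '' C i) := by
  refine ⟨?_, fun x => ?_⟩
  · simp only [mem_iUnion, mem_image]
    rintro _ ⟨i, p, hp, rfl⟩
    exact (hC i).1 p hp
  obtain ⟨i, hxi⟩ := mem_iUnion.1 x.2
  obtain ⟨p, hp, hpx⟩ := (hC i).2 ⟨x, hxi⟩
  refine ⟨_, mem_iUnion.2 ⟨i, mem_image_of_mem _ hp⟩, ?_⟩
  rw [dynDist_restrict] at hpx ⊢
  exact hpx

lemma dynDelta_restrict_iUnion_ne_top {ι : Type*} [Countable ι] {A : ι → Set X}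
    (hA : ∀ i, MapsTo f (A i) (A i)) {t s : ℝ} (hΔ : ∀ i, dynDelta (hA i).restrict ε t ≠ ⊤)
    (hts : t < s) : dynDelta (unionMapsTo hA).restrict ε s ≠ ⊤ := by
  obtain ⟨δ, hδ0, hδ⟩ := ENNReal.exists_pos_sum_of_countable' one_ne_zero ι
  refine ne_top_of_le_ne_top ENNReal.one_ne_top (iSup_le fun N => ?_)
  choose C hC hCs using fun i => exists_isDynCover_covWeight_le (hΔ i) hts (N + 1) (hδ0 i).ne'
  refine iInf_le_of_le ⟨_, IsDynCover.iUnion_restrict hA hC⟩ ?_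
  calc _ ≤ ∑' i, covWeight (Prod.map (inclusion (subset_iUnion A i)) id '' C i) s :=
        covWeight_iUnion_le _ s
    _ ≤ ∑' i, δ i :=
        ENNReal.tsum_le_tsum fun i =>
          (covWeight_image_le (Prod.map (inclusion (subset_iUnion A i)) id) (fun _ => rfl) _ s).trans
            (hCs i)
    _ ≤ 1 := hδ.le

lemma scrit_restrict_iUnion_le {ι : Type*} [Countable ι] {A : ι → Set X}
    (hA : ∀ i, MapsTo f (A i) (A i)) (ε : ℝ) :
    scrit (unionMapsTo hA).restrict ε ≤ ⨆ i, scrit (hA i).restrict ε := by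
  refine sSup_le ?_
  rintro _ ⟨s, -, rfl, hΔ⟩
  by_contra! hlt
  obtain ⟨u, hsup, hus⟩ := exists_between hlt
  have hu : u ≠ ⊤ := ne_top_of_lt hus
  refine dynDelta_restrict_iUnion_ne_top hA (fun i hi => ?_)
    (ENNReal.toReal_lt_of_lt_ofReal hus) hΔ
  have hle := (ofReal_le_scrit ENNReal.toReal_nonneg hi).trans
    (le_iSup (fun i => scrit (hA i).restrict ε) i)
  rw [ENNReal.ofReal_toReal hu] at hle
  exact (hsup.trans_le hle).false

lemma hpolStar_restrict_iUnion_le {ι : Type*} [Countable ι] {A : ι → Set X}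
    (hA : ∀ i, MapsTo f (A i) (A i)) :
    hpolStar (unionMapsTo hA).restrict ≤ ⨆ i, hpolStar (hA i).restrict :=
  iSup_le fun ε => (scrit_restrict_iUnion_le hA ε).trans <|
    iSup_mono fun i => le_iSup (fun ε : {e : ℝ // 0 < e} => scrit (hA i).restrict ε) ε

end Restrict

theorem stmt7_general {X : Type*} [MetricSpace X] (f : X → X)
    (F : ℕ → Set X) (hinv : ∀ i, Set.MapsTo f (F i) (F i)) :
    hpolStar (Set.MapsTo.restrict f (⋃ i, F i) (⋃ i, F i) (unionMapsTo hinv)) =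
      ⨆ i : ℕ, hpolStar (Set.MapsTo.restrict f (F i) (F i) (hinv i)) :=
  le_antisymm (hpolStar_restrict_iUnion_le hinv) <|
    iSup_le fun i => hpolStar_restrict_mono (subset_iUnion F i) (hinv i) (unionMapsTo hinv)

/-- σ-union property of the weak polynomial entropy: if `F = ⋃_{i∈ℕ} Fᵢ` with each `Fᵢ`
closed and `f`-invariant (and `F` compact and invariant), then
`h_pol^*(f|_F) = sup_i h_pol^*(f|_{Fᵢ})`. -/
theorem stmt7 {X : Type*} [MetricSpace X] [CompactSpace X] (f : X → X) (hf : Continuous f)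
    (F : ℕ → Set X) (hcl : ∀ i, IsClosed (F i)) (hinv : ∀ i, Set.MapsTo f (F i) (F i))
    (hFcomp : IsCompact (⋃ i, F i)) :
    hpolStar (Set.MapsTo.restrict f (⋃ i, F i) (⋃ i, F i) (unionMapsTo hinv)) =
      ⨆ i : ℕ, hpolStar (Set.MapsTo.restrict f (F i) (F i) (hinv i)) :=
  stmt7_general f F hinv
end
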